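/- Let m, k, s ∈ ℕ, and for 1 ≤ i ≤ s let ν_i > 0, p_i, θ_i ∈ [1,∞], and τ_i ≥ 0 with ∑_{i=1}^s τ_i = 1. Define p, θ ∈ [1,∞] by 1/p = ∑_{i=1}^s τ_i/p_i and 1/θ = ∑_{i=1}^s τ_i/θ_i. Then ⋂_{i=1}^s ν_i B^{m,k}_{p_i,θ_i} ⊂ ν_1^{τ_1} ⋯ ν_s^{τ_s} B^{m,k}_{p,θ}. -/

import Mathlib

open scoped ENNReal NNReal BigOperators Pointwise

noncomputable section

def lNorm (s : ℝ≥0∞) {ι : Type*} [Fintype ι] (x : ι → ℝ) : ℝ :=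
  if s = ∞ then ⨆ i, |x i| else (∑ i, |x i| ^ s.toReal) ^ (1 / s.toReal)

def mixedNorm (p θ : ℝ≥0∞) {m k : ℕ} (x : Fin m → Fin k → ℝ) : ℝ :=
  lNorm θ fun j => lNorm p fun i => x i j

def mixedBall (m k : ℕ) (p θ : ℝ≥0∞) : Set (Fin m → Fin k → ℝ) :=
  {x | mixedNorm p θ x ≤ 1}

def kolWidth (m k n : ℕ) (M : Set (Fin m → Fin k → ℝ)) (q σ : ℝ≥0∞) : ℝ :=
  ⨅ L : {L : Submodule ℝ (Fin m → Fin k → ℝ) // Module.finrank ℝ L ≤ n},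
    ⨆ x : M, ⨅ y : L.1,
      mixedNorm q σ ((x : Fin m → Fin k → ℝ) - (y : Fin m → Fin k → ℝ))

def ir (p : ℝ≥0∞) : ℝ := p⁻¹.toReal

def omegaE (p q : ℝ≥0∞) : ℝ :=
  if q = 2 then 1 else min ((ir p - ir q) / (1 / 2 - ir q)) 1

def expOf (t : ℝ) : ℝ≥0∞ := (ENNReal.ofReal t)⁻¹

def Phi (q σ : ℝ≥0∞) (m k n : ℕ) (p θ : ℝ≥0∞) : ℝ≥0∞ :=
  let M : ℝ≥0∞ := m
  let K : ℝ≥0∞ := k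
  let W : ℝ≥0∞ := ((n : ℝ≥0∞))⁻¹ ^ ((1 : ℝ) / 2) * M ^ ir q * K ^ ir σ
  let Wm : ℝ≥0∞ := ((n : ℝ≥0∞))⁻¹ ^ ((1 : ℝ) / 2) * M ^ ((1 : ℝ) / 2) * K ^ ir σ
  let Wk : ℝ≥0∞ := ((n : ℝ≥0∞))⁻¹ ^ ((1 : ℝ) / 2) * M ^ ir q * K ^ ((1 : ℝ) / 2)
  if q ≤ p then
    if σ ≤ θ then
      M ^ (ir q - ir p) * K ^ (ir σ - ir θ)
    else
      min (M ^ (ir q - ir p)) (M ^ (ir q - ir p) * Wm ^ omegaE θ σ)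
  else if σ ≤ θ then
    min (K ^ (ir σ - ir θ)) (K ^ (ir σ - ir θ) * Wk ^ omegaE p q)
  else if p ≤ 2 ∧ θ ≤ 2 then
    min 1 W
  else if omegaE p q ≤ omegaE θ σ then
    min (min 1 (W ^ omegaE p q)) (M ^ (ir q - ir p) * Wm ^ omegaE θ σ)
  else
    min (min 1 (W ^ omegaE θ σ)) (K ^ (ir σ - ir θ) * Wk ^ omegaE p q)

/-- `Ψ₀ = inf_{α ∈ A} ν_α Φ(p_α, θ_α)`. -/
def Psi0 {A : Type*} (q σ : ℝ≥0∞) (m k n : ℕ) (p θ : A → ℝ≥0∞) (ν : A → ℝ) : ℝ≥0∞ :=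
  ⨅ a : A, ENNReal.ofReal (ν a) * Phi q σ m k n (p a) (θ a)

/-- `Ψ₁`: infimum over pairs `(α, β) ∈ N₁`, i.e. `p_α ≠ q` and
`1/q = (1−λ)/p_α + λ/p_β` for some `λ ∈ (0,1)`, of
`ν_α^{1−λ} ν_β^{λ} Φ(q, θ̂_{α,β})` where `1/θ̂_{α,β} = (1−λ)/θ_α + λ/θ_β`. -/
def Psi1 {A : Type*} (q σ : ℝ≥0∞) (m k n : ℕ) (p θ : A → ℝ≥0∞) (ν : A → ℝ) : ℝ≥0∞ :=
  ⨅ (a : A) (b : A) (lam : ℝ)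
    (_ : 0 < lam ∧ lam < 1 ∧ p a ≠ q ∧
      ir q = (1 - lam) * ir (p a) + lam * ir (p b)),
    ENNReal.ofReal (ν a) ^ (1 - lam) * ENNReal.ofReal (ν b) ^ lam *
      Phi q σ m k n q (expOf ((1 - lam) * ir (θ a) + lam * ir (θ b)))

/-- `Ψ₂`: infimum over `(α, β) ∈ N₂` of `ν_α^{1−μ} ν_β^{μ} Φ(p̂_{α,β}, σ)`. -/
def Psi2 {A : Type*} (q σ : ℝ≥0∞) (m k n : ℕ) (p θ : A → ℝ≥0∞) (ν : A → ℝ) : ℝ≥0∞ :=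
  ⨅ (a : A) (b : A) (lam : ℝ)
    (_ : 0 < lam ∧ lam < 1 ∧ θ a ≠ σ ∧
      ir σ = (1 - lam) * ir (θ a) + lam * ir (θ b)),
    ENNReal.ofReal (ν a) ^ (1 - lam) * ENNReal.ofReal (ν b) ^ lam *
      Phi q σ m k n (expOf ((1 - lam) * ir (p a) + lam * ir (p b))) σ

/-- `Ψ₃`: infimum over `(α, β) ∈ N₃` of `ν_α^{1−λ} ν_β^{λ} Φ(2, θ̃_{α,β})`. -/
def Psi3 {A : Type*} (q σ : ℝ≥0∞) (m k n : ℕ) (p θ : A → ℝ≥0∞) (ν : A → ℝ) : ℝ≥0∞ :=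
  ⨅ (a : A) (b : A) (lam : ℝ)
    (_ : 0 < lam ∧ lam < 1 ∧ p a ≠ 2 ∧
      (1 : ℝ) / 2 = (1 - lam) * ir (p a) + lam * ir (p b)),
    ENNReal.ofReal (ν a) ^ (1 - lam) * ENNReal.ofReal (ν b) ^ lam *
      Phi q σ m k n 2 (expOf ((1 - lam) * ir (θ a) + lam * ir (θ b)))

/-- `Ψ₄`: infimum over `(α, β) ∈ N₄` of `ν_α^{1−μ} ν_β^{μ} Φ(p̃_{α,β}, 2)`. -/
def Psi4 {A : Type*} (q σ : ℝ≥0∞) (m k n : ℕ) (p θ : A → ℝ≥0∞) (ν : A → ℝ) : ℝ≥0∞ :=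
  ⨅ (a : A) (b : A) (lam : ℝ)
    (_ : 0 < lam ∧ lam < 1 ∧ θ a ≠ 2 ∧
      (1 : ℝ) / 2 = (1 - lam) * ir (θ a) + lam * ir (θ b)),
    ENNReal.ofReal (ν a) ^ (1 - lam) * ENNReal.ofReal (ν b) ^ lam *
      Phi q σ m k n (expOf ((1 - lam) * ir (p a) + lam * ir (p b))) 2

/-- `Ψ₅`: infimum over `(α, β) ∈ N₅`, i.e. such that for some `λ ∈ (0,1)` the
interpolated exponents satisfy `p_{α,β} ∈ (2,q)`, `θ_{α,β} ∈ (2,σ)`, lie on the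
"critical line", while `(1/p_α, 1/θ_α)` does not, of
`ν_α^{1−λ} ν_β^{λ} Φ(p_{α,β}, θ_{α,β})`. -/
def Psi5 {A : Type*} (q σ : ℝ≥0∞) (m k n : ℕ) (p θ : A → ℝ≥0∞) (ν : A → ℝ) : ℝ≥0∞ :=
  ⨅ (a : A) (b : A) (lam : ℝ)
    (_ : 0 < lam ∧ lam < 1 ∧
      ir q < (1 - lam) * ir (p a) + lam * ir (p b) ∧
      (1 - lam) * ir (p a) + lam * ir (p b) < 1 / 2 ∧
      ir σ < (1 - lam) * ir (θ a) + lam * ir (θ b) ∧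
      (1 - lam) * ir (θ a) + lam * ir (θ b) < 1 / 2 ∧
      ((1 - lam) * ir (p a) + lam * ir (p b) - ir q) / (1 / 2 - ir q) =
        ((1 - lam) * ir (θ a) + lam * ir (θ b) - ir σ) / (1 / 2 - ir σ) ∧
      (ir (p a) - ir q) / (1 / 2 - ir q) ≠ (ir (θ a) - ir σ) / (1 / 2 - ir σ)),
    ENNReal.ofReal (ν a) ^ (1 - lam) * ENNReal.ofReal (ν b) ^ lam *
      Phi q σ m k n (expOf ((1 - lam) * ir (p a) + lam * ir (p b)))
        (expOf ((1 - lam) * ir (θ a) + lam * ir (θ b)))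

/-- `Ψ₆`: infimum over triples `(α, β, γ) ∈ N₆` (with positive weights `τ` summing to `1`
interpolating `(1/q, 1/σ)`, the three points not collinear) of
`ν_α^{τ_α} ν_β^{τ_β} ν_γ^{τ_γ} Φ(q, σ)`. -/
def Psi6 {A : Type*} (q σ : ℝ≥0∞) (m k n : ℕ) (p θ : A → ℝ≥0∞) (ν : A → ℝ) : ℝ≥0∞ :=
  ⨅ (a : A) (b : A) (c : A) (ta : ℝ) (tb : ℝ) (tc : ℝ)
    (_ : 0 < ta ∧ 0 < tb ∧ 0 < tc ∧ ta + tb + tc = 1 ∧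
      ir q = ta * ir (p a) + tb * ir (p b) + tc * ir (p c) ∧
      ir σ = ta * ir (θ a) + tb * ir (θ b) + tc * ir (θ c) ∧
      (ir (p b) - ir (p a)) * (ir (θ c) - ir (θ a)) ≠
        (ir (p c) - ir (p a)) * (ir (θ b) - ir (θ a))),
    ENNReal.ofReal (ν a) ^ ta * ENNReal.ofReal (ν b) ^ tb * ENNReal.ofReal (ν c) ^ tc *
      Phi q σ m k n q σ

/-- `Ψ₇`: as `Ψ₆`, with `(1/2, 1/2)` in place of `(1/q, 1/σ)`. -/
def Psi7 {A : Type*} (q σ : ℝ≥0∞) (m k n : ℕ) (p θ : A → ℝ≥0∞) (ν : A → ℝ) : ℝ≥0∞ :=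
  ⨅ (a : A) (b : A) (c : A) (ta : ℝ) (tb : ℝ) (tc : ℝ)
    (_ : 0 < ta ∧ 0 < tb ∧ 0 < tc ∧ ta + tb + tc = 1 ∧
      (1 : ℝ) / 2 = ta * ir (p a) + tb * ir (p b) + tc * ir (p c) ∧
      (1 : ℝ) / 2 = ta * ir (θ a) + tb * ir (θ b) + tc * ir (θ c) ∧
      (ir (p b) - ir (p a)) * (ir (θ c) - ir (θ a)) ≠
        (ir (p c) - ir (p a)) * (ir (θ b) - ir (θ a))),
    ENNReal.ofReal (ν a) ^ ta * ENNReal.ofReal (ν b) ^ tb * ENNReal.ofReal (ν c) ^ tc *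
      Phi q σ m k n 2 2

/-- `min_{0 ≤ j ≤ 7} Ψ_j`. -/
def PsiMin {A : Type*} (q σ : ℝ≥0∞) (m k n : ℕ) (p θ : A → ℝ≥0∞) (ν : A → ℝ) : ℝ≥0∞ :=
  Psi0 q σ m k n p θ ν ⊓ Psi1 q σ m k n p θ ν ⊓ Psi2 q σ m k n p θ ν ⊓
    Psi3 q σ m k n p θ ν ⊓ Psi4 q σ m k n p θ ν ⊓ Psi5 q σ m k n p θ ν ⊓
    Psi6 q σ m k n p θ ν ⊓ Psi7 q σ m k n p θ ν

/-- The set `V^{m,k}_{r,l}`: the convex hull of all `γ(e)`, where `e` is the 0/1 matrix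
supported on the first `r` rows and first `l` columns and `γ` ranges over all
permutations of rows/columns composed with sign changes of rows/columns. -/
def Vset (m k r l : ℕ) : Set (Fin m → Fin k → ℝ) :=
  convexHull ℝ {y | ∃ (t₁ : Equiv.Perm (Fin m)) (t₂ : Equiv.Perm (Fin k))
      (e₁ : Fin m → ℝ) (e₂ : Fin k → ℝ),
    (∀ i, e₁ i = 1 ∨ e₁ i = -1) ∧ (∀ j, e₂ j = 1 ∨ e₂ j = -1) ∧
    y = fun i j => e₁ i * e₂ j * (if (t₁ i : ℕ) < r ∧ (t₂ j : ℕ) < l then 1 else 0)}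


lemma lNorm_nonneg (s : ℝ≥0∞) {ι : Type*} [Fintype ι] (x : ι → ℝ) : 0 ≤ lNorm s x := by
  unfold lNorm
  split
  · exact Real.iSup_nonneg fun i => abs_nonneg _
  · positivity

lemma lNorm_abs (s : ℝ≥0∞) {ι : Type*} [Fintype ι] (x : ι → ℝ) :
    lNorm s (fun i => |x i|) = lNorm s x := by
  unfold lNorm; simp [abs_abs]

lemma abs_le_lNorm_top {ι : Type*} [Fintype ι] (x : ι → ℝ) (i : ι) :
    |x i| ≤ lNorm ∞ x := by
  unfold lNorm
  rw [if_pos rfl]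
  exact le_ciSup (f := fun i => |x i|) (Finite.bddAbove_range _) i

lemma lNorm_mono (s : ℝ≥0∞) {ι : Type*} [Fintype ι] {x y : ι → ℝ}
    (h : ∀ i, |x i| ≤ y i) : lNorm s x ≤ lNorm s y := by
  have hy : ∀ i, y i = |y i| := fun i => (abs_of_nonneg ((abs_nonneg _).trans (h i))).symm
  unfold lNorm
  split
  · cases isEmpty_or_nonempty ι with
    | inl he => simp [Real.iSup_of_isEmpty]
    | inr hne =>
      exact ciSup_le fun i =>
        ((h i).trans (hy i).le).trans (le_ciSup (f := fun i => |y i|) (Finite.bddAbove_range _) i)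
  · refine Real.rpow_le_rpow (by positivity) (Finset.sum_le_sum fun i _ => ?_) (by positivity)
    exact Real.rpow_le_rpow (abs_nonneg _) ((h i).trans (hy i).le) ENNReal.toReal_nonneg

lemma lNorm_pow {s : ℝ≥0∞} (hs : s ≠ ∞) (ht : s.toReal ≠ 0) {ι : Type*} [Fintype ι]
    (x : ι → ℝ) : lNorm s x ^ s.toReal = ∑ i, |x i| ^ s.toReal := by
  unfold lNorm
  rw [if_neg hs, ← Real.rpow_mul (by positivity), one_div, inv_mul_cancel₀ ht, Real.rpow_one]

lemma lNorm_smul {s : ℝ≥0∞} (hs : s ≠ ∞ → s.toReal ≠ 0) {ι : Type*} [Fintype ι] {c : ℝ}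
    (hc : 0 ≤ c) (x : ι → ℝ) : lNorm s (fun i => c * x i) = c * lNorm s x := by
  rcases eq_or_ne s ∞ with h | h
  · simp only [lNorm, if_pos h]
    simp only [abs_mul, abs_of_nonneg hc]
    exact (Real.mul_iSup_of_nonneg hc _).symm
  · have ht : s.toReal ≠ 0 := hs h
    simp only [lNorm, if_neg h]
    simp only [abs_mul, abs_of_nonneg hc, Real.mul_rpow hc (abs_nonneg _)]
    rw [← Finset.mul_sum, Real.mul_rpow (by positivity) (by positivity),
      ← Real.rpow_mul hc, mul_one_div, div_self ht, Real.rpow_one]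

lemma ir_nonneg (p : ℝ≥0∞) : 0 ≤ ir p := ENNReal.toReal_nonneg

lemma ir_eq_zero_iff {p : ℝ≥0∞} (hp : 1 ≤ p) : ir p = 0 ↔ p = ∞ := by
  have hp0 : p ≠ 0 := by positivity
  unfold ir
  rw [ENNReal.toReal_eq_zero_iff]
  simp [ENNReal.inv_eq_zero, ENNReal.inv_eq_top, hp0]

lemma ir_eq_inv_toReal {p : ℝ≥0∞} : ir p = (p.toReal)⁻¹ := by
  unfold ir; rw [ENNReal.toReal_inv]

lemma toReal_pos_of_ne_top {p : ℝ≥0∞} (hp : 1 ≤ p) (h : p ≠ ∞) : 0 < p.toReal :=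
  ENNReal.toReal_pos (by positivity) h

lemma expOf_zero : expOf 0 = ∞ := by simp [expOf]

lemma expOf_ne_top {t : ℝ} (ht : 0 < t) : expOf t ≠ ∞ := by
  simp [expOf, ENNReal.inv_eq_top, ENNReal.ofReal_eq_zero, not_le, ht]

lemma expOf_toReal {t : ℝ} (ht : 0 < t) : (expOf t).toReal = t⁻¹ := by
  rw [expOf, ENNReal.toReal_inv, ENNReal.toReal_ofReal ht.le]

lemma enn_holder {n s : ℕ} (f : Fin s → Fin n → ℝ≥0∞) (c : Fin s → ℝ)
    (hc : ∀ i, 0 ≤ c i) (hsum : ∑ i, c i = 1) :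
    ∑ j, ∏ i, f i j ^ c i ≤ ∏ i, (∑ j, f i j) ^ c i := by
  have H := ENNReal.lintegral_prod_norm_pow_le (μ := MeasureTheory.Measure.count)
    (Finset.univ : Finset (Fin s)) (f := f)
    (fun i _ => (measurable_of_countable _).aemeasurable) hsum (fun i _ => hc i)
  simpa [MeasureTheory.lintegral_count, tsum_fintype] using H

lemma real_holder {n s : ℕ} (f : Fin s → Fin n → ℝ) (hf : ∀ i j, 0 ≤ f i j)
    (c : Fin s → ℝ) (hc : ∀ i, 0 ≤ c i) (hsum : ∑ i, c i = 1) :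
    ∑ j, ∏ i, f i j ^ c i ≤ ∏ i, (∑ j, f i j) ^ c i := by
  have key := enn_holder (fun i j => ENNReal.ofReal (f i j)) c hc hsum
  rw [← ENNReal.ofReal_le_ofReal_iff
    (Finset.prod_nonneg fun i _ => Real.rpow_nonneg (Finset.sum_nonneg fun j _ => hf i j) _)]
  calc ENNReal.ofReal (∑ j, ∏ i, f i j ^ c i)
      = ∑ j, ∏ i, ENNReal.ofReal (f i j) ^ c i := by
        rw [ENNReal.ofReal_sum_of_nonneg
          (fun j _ => Finset.prod_nonneg fun i _ => Real.rpow_nonneg (hf i j) _)]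
        refine Finset.sum_congr rfl fun j _ => ?_
        rw [ENNReal.ofReal_prod_of_nonneg (fun i _ => Real.rpow_nonneg (hf i j) _)]
        exact Finset.prod_congr rfl fun i _ =>
          (ENNReal.ofReal_rpow_of_nonneg (hf i j) (hc i)).symm
    _ ≤ ∏ i, (∑ j, ENNReal.ofReal (f i j)) ^ c i := key
    _ = ENNReal.ofReal (∏ i, (∑ j, f i j) ^ c i) := by
        rw [ENNReal.ofReal_prod_of_nonneg
          (fun i _ => Real.rpow_nonneg (Finset.sum_nonneg fun j _ => hf i j) _)]
        refine Finset.prod_congr rfl fun i _ => ?_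
        rw [← ENNReal.ofReal_sum_of_nonneg (fun j _ => hf i j),
          ENNReal.ofReal_rpow_of_nonneg (Finset.sum_nonneg fun j _ => hf i j) (hc i)]

lemma lNorm_top_le {ι : Type*} [Fintype ι] {x : ι → ℝ} {b : ℝ} (hb : 0 ≤ b)
    (h : ∀ i, |x i| ≤ b) : lNorm ∞ x ≤ b := by
  unfold lNorm
  rw [if_pos rfl]
  cases isEmpty_or_nonempty ι with
  | inl he => rw [Real.iSup_of_isEmpty]; exact hb
  | inr hne => exact ciSup_le h

lemma lNorm_interp {n s : ℕ} (f : Fin s → Fin n → ℝ) (hf : ∀ i j, 0 ≤ f i j)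
    (θv : Fin s → ℝ≥0∞) (hθ : ∀ i, 1 ≤ θv i)
    (τ : Fin s → ℝ) (hτ : ∀ i, 0 ≤ τ i) (hsum : ∑ i, τ i = 1) :
    lNorm (expOf (∑ i, τ i * ir (θv i))) (fun j => ∏ i, f i j ^ τ i)
      ≤ ∏ i, lNorm (θv i) (f i) ^ τ i := by
  set t := ∑ i, τ i * ir (θv i) with ht_def
  have ht0 : 0 ≤ t := Finset.sum_nonneg fun i _ => mul_nonneg (hτ i) (ir_nonneg _)
  have hRHSnn : (0:ℝ) ≤ ∏ i, lNorm (θv i) (f i) ^ τ i :=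
    Finset.prod_nonneg fun i _ => Real.rpow_nonneg (lNorm_nonneg _ _) _
  rcases eq_or_lt_of_le ht0 with ht | ht
  · -- t = 0 : all exponents are ∞ where τ > 0
    have hterm : ∀ i ∈ Finset.univ, τ i * ir (θv i) = 0 :=
      (Finset.sum_eq_zero_iff_of_nonneg
        (fun i _ => mul_nonneg (hτ i) (ir_nonneg _))).1 ht.symm
    rw [← ht, expOf_zero]
    refine lNorm_top_le hRHSnn fun j => ?_
    rw [abs_of_nonneg (Finset.prod_nonneg fun i _ => Real.rpow_nonneg (hf i j) _)]
    refine Finset.prod_le_prod (fun i _ => Real.rpow_nonneg (hf i j) _) fun i _ => ?_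
    rcases eq_or_lt_of_le (hτ i) with hτi | hτi
    · rw [← hτi, Real.rpow_zero, Real.rpow_zero]
    · have hir : ir (θv i) = 0 := by
        rcases mul_eq_zero.1 (hterm i (Finset.mem_univ i)) with h' | h'
        · exact absurd h'.symm (ne_of_lt hτi)
        · exact h'
      have htop : θv i = ∞ := (ir_eq_zero_iff (hθ i)).1 hir
      refine Real.rpow_le_rpow (hf i j) ?_ (hτ i)
      calc f i j ≤ |f i j| := le_abs_self _
        _ ≤ lNorm ∞ (f i) := abs_le_lNorm_top _ j
        _ = lNorm (θv i) (f i) := by rw [htop]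
  · -- t > 0
    have htne : t ≠ 0 := ht.ne'
    have hgnn : ∀ j, (0:ℝ) ≤ ∏ i, f i j ^ τ i :=
      fun j => Finset.prod_nonneg fun i _ => Real.rpow_nonneg (hf i j) _
    have hLHS : lNorm (expOf t) (fun j => ∏ i, f i j ^ τ i)
        = (∑ j, (∏ i, f i j ^ τ i) ^ t⁻¹) ^ t := by
      unfold lNorm
      rw [if_neg (expOf_ne_top ht), expOf_toReal ht]
      congr 1
      · exact Finset.sum_congr rfl fun j _ => by rw [abs_of_nonneg (hgnn j)]
      · rw [one_div, inv_inv]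
    rw [hLHS]
    set c : Fin s → ℝ := fun i => τ i * ir (θv i) / t with hc
    have hcnn : ∀ i, 0 ≤ c i := fun i => div_nonneg (mul_nonneg (hτ i) (ir_nonneg _)) ht0
    have hcsum : ∑ i, c i = 1 := by
      simp only [hc]
      rw [← Finset.sum_div, ← ht_def, div_self htne]
    set F : Fin s → Fin n → ℝ :=
      fun i j => if θv i = ∞ then 1 else f i j ^ (θv i).toReal with hF
    have hFnn : ∀ i j, 0 ≤ F i j := fun i j => by
      simp only [hF]
      split
      · exact zero_le_one
      · exact Real.rpow_nonneg (hf i j) _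
    set D : Fin s → ℝ :=
      fun i => if θv i = ∞ then lNorm (θv i) (f i) ^ (τ i / t) else 1 with hD
    have hDnn : ∀ i, 0 ≤ D i := fun i => by
      simp only [hD]
      split
      · exact Real.rpow_nonneg (lNorm_nonneg _ _) _
      · exact zero_le_one
    -- pointwise bound
    have hpt : ∀ j, (∏ i, f i j ^ τ i) ^ t⁻¹ ≤ ∏ i, (D i * F i j ^ c i) := by
      intro j
      rw [← Real.finset_prod_rpow _ _ (fun i _ => Real.rpow_nonneg (hf i j) _)]
      refine Finset.prod_le_prod (fun i _ => Real.rpow_nonneg (Real.rpow_nonneg (hf i j) _) _)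
        fun i _ => ?_
      rw [← Real.rpow_mul (hf i j), ← div_eq_mul_inv]
      rcases eq_or_ne (θv i) ∞ with htop | htop
      · simp only [hD, hF, if_pos htop]
        rw [Real.one_rpow, mul_one]
        refine Real.rpow_le_rpow (hf i j) ?_ (div_nonneg (hτ i) ht0)
        calc f i j ≤ |f i j| := le_abs_self _
          _ ≤ lNorm ∞ (f i) := abs_le_lNorm_top _ j
          _ = lNorm (θv i) (f i) := by rw [htop]
      · have hθt : (θv i).toReal ≠ 0 := (toReal_pos_of_ne_top (hθ i) htop).ne'
        have hexp : (θv i).toReal * c i = τ i / t := by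
          simp only [hc, ir_eq_inv_toReal]
          field_simp
        simp only [hD, hF, if_neg htop]
        rw [one_mul, ← Real.rpow_mul (hf i j), hexp]
    -- sum the pointwise bound and apply Hölder
    have hsum_le : ∑ j, (∏ i, f i j ^ τ i) ^ t⁻¹ ≤ ∏ i, lNorm (θv i) (f i) ^ (τ i / t) := by
      calc ∑ j, (∏ i, f i j ^ τ i) ^ t⁻¹ ≤ ∑ j, ∏ i, (D i * F i j ^ c i) :=
            Finset.sum_le_sum fun j _ => hpt j
        _ = (∏ i, D i) * ∑ j, ∏ i, F i j ^ c i := by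
            rw [Finset.mul_sum]
            exact Finset.sum_congr rfl fun j _ => Finset.prod_mul_distrib
        _ ≤ (∏ i, D i) * ∏ i, (∑ j, F i j) ^ c i := by
            refine mul_le_mul_of_nonneg_left ?_ (Finset.prod_nonneg fun i _ => hDnn i)
            exact real_holder F hFnn c hcnn hcsum
        _ = ∏ i, (D i * (∑ j, F i j) ^ c i) := Finset.prod_mul_distrib.symm
        _ = ∏ i, lNorm (θv i) (f i) ^ (τ i / t) := by
            refine Finset.prod_congr rfl fun i _ => ?_
            rcases eq_or_ne (θv i) ∞ with htop | htop
            · have hci : c i = 0 := by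
                simp only [hc]
                have : ir (θv i) = 0 := by rw [htop]; simp [ir]
                rw [this, mul_zero, zero_div]
              simp only [hD, hF, if_pos htop, hci, Real.rpow_zero, mul_one]
            · have hθt : (θv i).toReal ≠ 0 := (toReal_pos_of_ne_top (hθ i) htop).ne'
              simp only [hD, hF, if_neg htop]
              rw [one_mul]
              have hsumF : ∑ j, f i j ^ (θv i).toReal
                  = lNorm (θv i) (f i) ^ (θv i).toReal := by
                rw [lNorm_pow htop hθt]
                exact Finset.sum_congr rfl fun j _ => by rw [abs_of_nonneg (hf i j)]
              have hexp : (θv i).toReal * c i = τ i / t := by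
                simp only [hc, ir_eq_inv_toReal]
                field_simp
              rw [hsumF, ← Real.rpow_mul (lNorm_nonneg _ _), hexp]
    calc (∑ j, (∏ i, f i j ^ τ i) ^ t⁻¹) ^ t
        ≤ (∏ i, lNorm (θv i) (f i) ^ (τ i / t)) ^ t := by
          refine Real.rpow_le_rpow ?_ hsum_le ht0
          exact Finset.sum_nonneg fun j _ => Real.rpow_nonneg (hgnn j) _
      _ = ∏ i, lNorm (θv i) (f i) ^ τ i := by
          rw [← Real.finset_prod_rpow _ _
            (fun i _ => Real.rpow_nonneg (lNorm_nonneg _ _) _)]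
          refine Finset.prod_congr rfl fun i _ => ?_
          rw [← Real.rpow_mul (lNorm_nonneg _ _), div_mul_cancel₀ _ htne]

lemma lNorm_scalar_interp {n s : ℕ} (y : Fin n → ℝ)
    (θv : Fin s → ℝ≥0∞) (hθ : ∀ i, 1 ≤ θv i)
    (τ : Fin s → ℝ) (hτ : ∀ i, 0 ≤ τ i) (hsum : ∑ i, τ i = 1) :
    lNorm (expOf (∑ i, τ i * ir (θv i))) y ≤ ∏ i, lNorm (θv i) y ^ τ i := by
  have key := lNorm_interp (fun _ j => |y j|) (fun _ j => abs_nonneg _) θv hθ τ hτ hsum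
  have heq : (fun j => ∏ i : Fin s, |y j| ^ τ i) = fun j => |y j| := by
    funext j
    rcases eq_or_lt_of_le (abs_nonneg (y j)) with h0 | h0
    · obtain ⟨i, hi⟩ : ∃ i, τ i ≠ 0 := by
        by_contra h
        push_neg at h
        simp [h] at hsum
      rw [← h0]
      exact Finset.prod_eq_zero (Finset.mem_univ i) (Real.zero_rpow hi)
    · rw [← Real.rpow_sum_of_pos h0 τ Finset.univ, hsum, Real.rpow_one]
  rw [heq] at key
  simpa only [lNorm_abs] using key

lemma mixedNorm_nonneg (p θ : ℝ≥0∞) {m k : ℕ} (x : Fin m → Fin k → ℝ) :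
    0 ≤ mixedNorm p θ x := lNorm_nonneg _ _

lemma mixedNorm_smul {p θ : ℝ≥0∞} (hp : p ≠ ∞ → p.toReal ≠ 0) (hθ : θ ≠ ∞ → θ.toReal ≠ 0)
    {m k : ℕ} {c : ℝ} (hc : 0 ≤ c) (x : Fin m → Fin k → ℝ) :
    mixedNorm p θ (c • x) = c * mixedNorm p θ x := by
  unfold mixedNorm
  have h1 : (fun j => lNorm p fun i => (c • x) i j)
      = fun j => c * lNorm p fun i => x i j := by
    funext j
    rw [← lNorm_smul hp hc]
    congr 1
  rw [h1, lNorm_smul hθ hc]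

lemma expOf_cond {t : ℝ} (ht : 0 ≤ t) : expOf t ≠ ∞ → (expOf t).toReal ≠ 0 := by
  rcases eq_or_lt_of_le ht with h | h
  · intro hne
    exact absurd (by rw [← h, expOf_zero]) hne
  · intro _
    rw [expOf_toReal h]
    exact inv_ne_zero h.ne'

/-- **Interpolation of finitely many balls.** If `τ_i ≥ 0`, `∑ τ_i = 1`,
`1/p = ∑ τ_i / p_i` and `1/θ = ∑ τ_i / θ_i`, then
`⋂_i ν_i B^{m,k}_{p_i,θ_i} ⊆ (∏_i ν_i^{τ_i}) B^{m,k}_{p,θ}`. -/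
theorem statement9 (m k s : ℕ) (ν : Fin s → ℝ) (hν : ∀ i, 0 < ν i)
    (p θ : Fin s → ℝ≥0∞) (hp : ∀ i, 1 ≤ p i) (hθ : ∀ i, 1 ≤ θ i)
    (τ : Fin s → ℝ) (hτ : ∀ i, 0 ≤ τ i) (hsum : ∑ i, τ i = 1) :
    (⋂ i : Fin s, ν i • mixedBall m k (p i) (θ i)) ⊆
      (∏ i : Fin s, ν i ^ τ i) •
        mixedBall m k (expOf (∑ i : Fin s, τ i * ir (p i)))
          (expOf (∑ i : Fin s, τ i * ir (θ i))) := by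
  intro x hx
  simp only [Set.mem_iInter] at hx
  have hbound : ∀ i, mixedNorm (p i) (θ i) x ≤ ν i := by
    intro i
    obtain ⟨y, hy, hxy⟩ := Set.mem_smul_set.1 (hx i)
    have hppos : p i ≠ ∞ → (p i).toReal ≠ 0 :=
      fun h => (toReal_pos_of_ne_top (hp i) h).ne'
    have hθpos : θ i ≠ ∞ → (θ i).toReal ≠ 0 :=
      fun h => (toReal_pos_of_ne_top (hθ i) h).ne'
    rw [← hxy, mixedNorm_smul hppos hθpos (hν i).le]
    calc ν i * mixedNorm (p i) (θ i) y ≤ ν i * 1 :=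
          mul_le_mul_of_nonneg_left hy (hν i).le
      _ = ν i := mul_one _
  have htp0 : (0:ℝ) ≤ ∑ i, τ i * ir (p i) :=
    Finset.sum_nonneg fun i _ => mul_nonneg (hτ i) (ir_nonneg _)
  have htθ0 : (0:ℝ) ≤ ∑ i, τ i * ir (θ i) :=
    Finset.sum_nonneg fun i _ => mul_nonneg (hτ i) (ir_nonneg _)
  have hkey : mixedNorm (expOf (∑ i, τ i * ir (p i))) (expOf (∑ i, τ i * ir (θ i))) x
      ≤ ∏ i, ν i ^ τ i := by
    have step1 : ∀ j, |lNorm (expOf (∑ i, τ i * ir (p i))) (fun i' => x i' j)|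
        ≤ ∏ i, lNorm (p i) (fun i' => x i' j) ^ τ i := by
      intro j
      rw [abs_of_nonneg (lNorm_nonneg _ _)]
      exact lNorm_scalar_interp _ p hp τ hτ hsum
    have step2 : mixedNorm (expOf (∑ i, τ i * ir (p i))) (expOf (∑ i, τ i * ir (θ i))) x
        ≤ lNorm (expOf (∑ i, τ i * ir (θ i)))
            (fun j => ∏ i, lNorm (p i) (fun i' => x i' j) ^ τ i) :=
      lNorm_mono _ step1
    have step3 := lNorm_interp (fun i j => lNorm (p i) (fun i' => x i' j))
      (fun i j => lNorm_nonneg _ _) θ hθ τ hτ hsum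
    refine step2.trans (step3.trans ?_)
    exact Finset.prod_le_prod (fun i _ => Real.rpow_nonneg (lNorm_nonneg _ _) _)
      fun i _ => Real.rpow_le_rpow (mixedNorm_nonneg _ _ _) (hbound i) (hτ i)
  have hC : (0:ℝ) < ∏ i, ν i ^ τ i :=
    Finset.prod_pos fun i _ => Real.rpow_pos_of_pos (hν i) _
  rw [Set.mem_smul_set]
  refine ⟨(∏ i, ν i ^ τ i)⁻¹ • x, ?_, smul_inv_smul₀ hC.ne' x⟩
  show mixedNorm _ _ _ ≤ 1
  rw [mixedNorm_smul (expOf_cond htp0) (expOf_cond htθ0) (inv_nonneg.2 hC.le)]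
  exact (mul_le_mul_of_nonneg_left hkey (inv_nonneg.2 hC.le)).trans
    (by rw [inv_mul_cancel₀ hC.ne'])

end
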